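/- arXiv:0801.2256 — 5 statements merged into one kernel-verified Lean document; each statement's English description precedes it below -/
import Mathlib

section
/- For all nonnegative integers i ≤ j, the matching generating polynomials of cycles satisfy the identity q_i(x)·q_j(x) − q_{i+j}(x) = (−1)^i · x^i · q_{j−i}(x). In particular, q_i·q_j − q_{i+j} has all coefficients nonnegative when i is even, and all coefficients nonpositive when i is odd. -/
open Polynomial

/-- Cycle matching polynomials via the recurrence `q_k = q_{k-1} + x q_{k-2}`,
`q_0 = 2`, `q_1 = 1` (so `q_2 = 1 + 2x`). -/
noncomputable def qpoly : ℕ → Polynomial ℚ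
  | 0 => 2
  | 1 => 1
  | (k+2) => qpoly (k+1) + Polynomial.X * qpoly k

lemma qpoly_coeff_nonneg : ∀ k m, 0 ≤ (qpoly k).coeff m := by
  intro k
  induction k using Nat.strong_induction_on with
  | _ k ih =>
    match k with
    | 0 => intro m; show (0:ℚ) ≤ ((2 : Polynomial ℚ)).coeff m
           rcases m with _ | m <;> simp [Polynomial.coeff_one]
    | 1 => intro m; show (0:ℚ) ≤ ((1 : Polynomial ℚ)).coeff m
           rcases m with _ | m <;> simp [Polynomial.coeff_one]
    | k+2 =>
      intro m
      have h1 := ih (k+1) (by omega)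
      have h2 := ih k (by omega)
      simp only [qpoly, Polynomial.coeff_add]
      have : 0 ≤ (Polynomial.X * qpoly k).coeff m := by
        rw [mul_comm, ← pow_one (Polynomial.X : Polynomial ℚ),
          Polynomial.coeff_mul_X_pow']
        split <;> [exact h2 _; rfl]
      have := h1 m
      linarith

lemma qpoly_id : ∀ i j : ℕ, i ≤ j →
    qpoly i * qpoly j - qpoly (i + j) =
      (-1) ^ i * Polynomial.X ^ i * qpoly (j - i) := by
  intro i
  induction i using Nat.strong_induction_on with
  | _ i ih =>
    match i with
    | 0 => intro j hj
           simp [qpoly]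
           ring
    | 1 =>
      intro j hj
      obtain ⟨d, rfl⟩ := Nat.exists_eq_add_of_le hj
      have e0 : 1 + d = d + 1 := by omega
      have e : 1 + (d + 1) = d + 2 := by omega
      rw [e0, e]
      show qpoly 1 * qpoly (d + 1) - (qpoly (d+1) + Polynomial.X * qpoly d) = _
      have e1 : d + 1 - 1 = d := by omega
      rw [e1]
      show (1 : Polynomial ℚ) * qpoly (d+1) - (qpoly (d+1) + Polynomial.X * qpoly d) = _
      ring
    | k+2 =>
      intro j hj
      obtain ⟨d, rfl⟩ := Nat.exists_eq_add_of_le hj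
      have h1 := ih (k+1) (by omega) (k+2+d) (by omega)
      have h2 := ih k (by omega) (k+2+d) (by omega)
      have e1 : k + 1 + (k + 2 + d) = (2*k + d + 1) + 2 := by omega
      have e2 : k + (k + 2 + d) = 2*k + d + 2 := by omega
      have e3 : k + 2 + d - (k + 1) = d + 1 := by omega
      have e4 : k + 2 + d - k = d + 2 := by omega
      have e5 : k + 2 + (k + 2 + d) = (2*k + d + 2) + 2 := by omega
      have e6 : k + 2 + d - (k + 2) = d := by omega
      rw [e1, e3] at h1
      rw [e2, e4] at h2
      rw [e5, e6]
      have rq : qpoly (k+2) = qpoly (k+1) + Polynomial.X * qpoly k := rfl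
      have rq2 : qpoly (2*k+d+2 + 2) =
          qpoly (2*k+d+2+1) + Polynomial.X * qpoly (2*k+d+2) := rfl
      have rq3 : qpoly (d+2) = qpoly (d+1) + Polynomial.X * qpoly d := rfl
      have e7 : 2*k+d+2+1 = (2*k+d+1)+2 := by omega
      rw [rq, rq2, e7]
      have lhs : qpoly (k + 1) * qpoly (k + 2 + d) - qpoly (2*k+d+1+2)
          + Polynomial.X * (qpoly k * qpoly (k + 2 + d) - qpoly (2*k+d+2))
          = (-1)^(k+1) * Polynomial.X^(k+1) * qpoly (d+1)
          + Polynomial.X * ((-1)^k * Polynomial.X^k * qpoly (d+2)) := by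
        rw [h1, h2]
      rw [rq3] at lhs
      calc (qpoly (k + 1) + Polynomial.X * qpoly k) * qpoly (k + 2 + d) -
            (qpoly (2*k+d+1+2) + Polynomial.X * qpoly (2*k+d+2))
          = qpoly (k + 1) * qpoly (k + 2 + d) - qpoly (2*k+d+1+2)
            + Polynomial.X * (qpoly k * qpoly (k + 2 + d) - qpoly (2*k+d+2)) := by
              ring
        _ = (-1)^(k+1) * Polynomial.X^(k+1) * qpoly (d+1)
            + Polynomial.X * ((-1)^k * Polynomial.X^k *
              (qpoly (d+1) + Polynomial.X * qpoly d)) := lhs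
        _ = (-1) ^ (k+2) * Polynomial.X ^ (k+2) * qpoly d := by ring

/-- For `0 ≤ i ≤ j`: `q_i q_j − q_{i+j} = (−1)^i x^i q_{j−i}`.  In particular
`q_i q_j − q_{i+j}` has all coefficients nonnegative when `i` is even and all
coefficients nonpositive when `i` is odd. -/
theorem qpoly_product_identity (i j : ℕ) (hij : i ≤ j) :
    qpoly i * qpoly j - qpoly (i + j) =
      (-1) ^ i * Polynomial.X ^ i * qpoly (j - i) ∧
    (Even i → ∀ m : ℕ, 0 ≤ (qpoly i * qpoly j - qpoly (i + j)).coeff m) ∧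
    (Odd i → ∀ m : ℕ, (qpoly i * qpoly j - qpoly (i + j)).coeff m ≤ 0) := by
  have hid := qpoly_id i j hij
  refine ⟨hid, ?_, ?_⟩
  · intro he m
    rw [hid, he.neg_one_pow, one_mul, mul_comm, Polynomial.coeff_mul_X_pow']
    split <;> [exact qpoly_coeff_nonneg _ _; rfl]
  · intro ho m
    rw [hid, ho.neg_one_pow, neg_one_mul, neg_mul, Polynomial.coeff_neg,
      neg_nonpos, mul_comm, Polynomial.coeff_mul_X_pow']
    split <;> [exact qpoly_coeff_nonneg _ _; rfl]
end

section
/- For odd integers 3 ≤ i ≤ j, every coefficient of q_i(x)·q_j(x) is less than or equal to the corresponding coefficient of q_{i+j}(x). Consequently, for a 2-regular graph that is a disjoint union of two odd cycles C_i and C_j, φ(m, C_i ∪ C_j) ≤ φ(m, C_{i+j}) for all m. -/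
open Polynomial

/-- Number of `m`-matchings of a simple graph. -/
noncomputable def matchCount {V : Type*} [Fintype V] (G : SimpleGraph V) (m : ℕ) : ℕ := by
  classical
  exact (((Finset.univ : Finset (Sym2 V)).powersetCard m).filter
    (fun s => (∀ e ∈ s, e ∈ G.edgeSet) ∧
      ∀ e ∈ s, ∀ f ∈ s, e ≠ f → ∀ v ∈ e, v ∉ f)).card


/-!
Writing `j = i + d`, induction on `i` through the recurrence gives
`q_i q_{i+d} = q_{2i+d} + (-x)^i q_d`, so for odd `i` we get `q_{i+j} = q_i q_j + x^i q_{j-i}`,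
and the correction term has nonnegative coefficients.

For the graphs, matchings of `C_n` (`n ≥ 3`) are the sets of edges `{a, a+1}` whose indices are
pairwise not cyclically consecutive. Splitting on whether the last edge is used gives
`m(C_n) = p_{n-1} + x p_{n-3}` for the matching polynomial `m`, where `p_k`, the size generating
polynomial of the non-consecutive subsets of `k` consecutive integers, satisfies the same recurrence
as `q`; hence `m(C_n) = q_n`. Matching polynomials
multiply over disjoint unions, so the graph inequality is the polynomial one.
-/

open Finset

lemma qpoly_add_two (n : ℕ) : qpoly (n + 2) = qpoly (n + 1) + X * qpoly n := rfl

lemma qpoly_mul_qpoly_add (i d : ℕ) :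
    qpoly i * qpoly (i + d) = qpoly (2 * i + d) + (-X) ^ i * qpoly d := by
  induction i using Nat.twoStepInduction generalizing d with
  | zero => simp only [qpoly, Nat.mul_zero, Nat.zero_add, pow_zero]; ring
  | one =>
    rw [show 2 * 1 + d = d + 2 by omega, qpoly_add_two, add_comm 1 d]
    simp only [qpoly]; ring
  | more i ih0 ih1 =>
    have h1 := ih1 (d + 1)
    have h0 := ih0 (d + 2)
    rw [show i + 1 + (d + 1) = i + 2 + d by omega,
      show 2 * (i + 1) + (d + 1) = 2 * i + d + 3 by omega] at h1
    rw [show i + (d + 2) = i + 2 + d by omega, show 2 * i + (d + 2) = 2 * i + d + 2 by omega,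
      qpoly_add_two d] at h0
    rw [show 2 * (i + 2) + d = 2 * i + d + 2 + 2 by omega, qpoly_add_two (2 * i + d + 2),
      qpoly_add_two i]
    linear_combination h1 + X * h0

lemma coeff_qpoly_nonneg (n m : ℕ) : 0 ≤ (qpoly n).coeff m := by
  induction n using Nat.twoStepInduction generalizing m with
  | zero => simp only [qpoly, ← C_ofNat, coeff_C]; split <;> norm_num
  | one => simp only [qpoly, coeff_one]; split <;> norm_num
  | more n ih0 ih1 =>
    rw [qpoly_add_two, coeff_add]
    cases m with
    | zero => simpa using ih1 0
    | succ m => rw [coeff_X_mul]; exact add_nonneg (ih1 _) (ih0 _)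

lemma coeff_qpoly_mul_qpoly_le {i j : ℕ} (hij : i ≤ j) (hi : Odd i) (m : ℕ) :
    (qpoly i * qpoly j).coeff m ≤ (qpoly (i + j)).coeff m := by
  obtain ⟨d, rfl⟩ := Nat.exists_eq_add_of_le hij
  have hmerge : qpoly (i + (i + d)) = qpoly i * qpoly (i + d) + X ^ i * qpoly d := by
    rw [qpoly_mul_qpoly_add, hi.neg_pow, show i + (i + d) = 2 * i + d by omega]; ring
  rw [hmerge, coeff_add, coeff_X_pow_mul']
  split_ifs
  · exact le_add_of_nonneg_right (coeff_qpoly_nonneg _ _)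
  · rw [add_zero]

lemma Finset.sum_powerset_image {α β M : Type*} [DecidableEq β] [AddCommMonoid M] {f : α → β}
    {s : Finset α} (hf : Set.InjOn f s) (g : Finset β → M) :
    ∑ t ∈ (s.image f).powerset, g t = ∑ t ∈ s.powerset, g (t.image f) := by
  rw [powerset_image, sum_image (image_injOn_powerset_of_injOn hf)]

lemma Finset.sum_filter_powerset_insert {α R : Type*} [DecidableEq α] [CommSemiring R]
    {s : Finset α} {b : α} (hb : b ∉ s) (P : Finset α → Prop) [DecidablePred P] (x : R) :
    ∑ t ∈ (insert b s).powerset with P t, x ^ #t =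
      ∑ t ∈ s.powerset with P t, x ^ #t +
        x * ∑ t ∈ s.powerset with P (insert b t), x ^ #t := by
  simp only [sum_filter, sum_powerset_insert hb, mul_sum]
  congr 1
  refine sum_congr rfl fun t ht => ?_
  rw [card_insert_of_notMem fun hbt => hb (mem_powerset.1 ht hbt), pow_succ']
  split_ifs <;> simp

/-- The independence polynomial of the graph on `s` joining `a` to `a + 1`; for `s = range n` it is
the matching polynomial of the path with `n` edges. -/
noncomputable def noConsecutivePoly (s : Finset ℕ) : ℚ[X] :=
  ∑ t ∈ s.powerset with ∀ a ∈ t, a + 1 ∉ t, X ^ #t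

lemma noConsecutivePoly_Ico_add_two {a b : ℕ} (hab : a ≤ b) :
    noConsecutivePoly (Ico a (b + 2)) =
      noConsecutivePoly (Ico a (b + 1)) + X * noConsecutivePoly (Ico a b) := by
  rw [Nat.Ico_succ_right_eq_insert_Ico (by omega : a ≤ b + 1)]
  unfold noConsecutivePoly
  rw [sum_filter_powerset_insert (by simp) _ X]
  congr 2
  refine sum_congr ?_ fun _ _ => rfl
  ext t
  simp only [mem_filter, mem_powerset, mem_insert, subset_iff, mem_Ico]
  grind

lemma noConsecutivePoly_empty : noConsecutivePoly ∅ = 1 := by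
  simp [noConsecutivePoly, sum_filter]

lemma noConsecutivePoly_singleton (a : ℕ) : noConsecutivePoly {a} = 1 + X := by
  rw [← insert_empty, noConsecutivePoly, sum_filter_powerset_insert (notMem_empty a) _ X]
  simp [sum_filter]

lemma noConsecutivePoly_Ico_add (a n : ℕ) :
    noConsecutivePoly (Ico a (a + n)) = noConsecutivePoly (range n) := by
  induction n using Nat.twoStepInduction with
  | zero => simp
  | one => rw [Nat.Ico_succ_singleton, range_one, noConsecutivePoly_singleton,
      noConsecutivePoly_singleton]
  | more n ih0 ih1 =>
    rw [range_eq_Ico, ← add_assoc, noConsecutivePoly_Ico_add_two (by omega),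
      noConsecutivePoly_Ico_add_two (by omega), add_assoc, ih1, ih0, range_eq_Ico,
      range_eq_Ico]

lemma noConsecutivePoly_range_add_two (n : ℕ) :
    noConsecutivePoly (range (n + 2)) =
      noConsecutivePoly (range (n + 1)) + X * noConsecutivePoly (range n) := by
  simp only [range_eq_Ico, noConsecutivePoly_Ico_add_two (Nat.zero_le n)]

lemma qpoly_add_three (n : ℕ) :
    qpoly (n + 3) = noConsecutivePoly (range (n + 2)) + X * noConsecutivePoly (range n) := by
  induction n using Nat.twoStepInduction with
  | zero | one =>
    simp only [qpoly, Nat.reduceAdd, noConsecutivePoly_range_add_two, range_one, range_zero,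
      noConsecutivePoly_singleton, noConsecutivePoly_empty]
    ring
  | more n ih0 ih1 =>
    rw [qpoly_add_two, ih1, ih0, noConsecutivePoly_range_add_two (n + 2),
      noConsecutivePoly_range_add_two n]
    ring

lemma qpoly_eq_sum_cyclic (n : ℕ) :
    qpoly (n + 3) =
      ∑ t ∈ (range (n + 3)).powerset with ∀ a ∈ t, (a + 1) % (n + 3) ∉ t, X ^ #t := by
  have hmod : ∀ a < n + 2, (a + 1) % (n + 3) = a + 1 := fun a ha => Nat.mod_eq_of_lt (by omega)
  rw [qpoly_add_three, range_add_one (n := n + 2), sum_filter_powerset_insert notMem_range_self _ X,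
    ← noConsecutivePoly_Ico_add 1 n, noConsecutivePoly, noConsecutivePoly]
  refine congrArg₂ (· + ·) (sum_congr ?_ fun _ _ => rfl)
    (congrArg (X * ·) (sum_congr ?_ fun _ _ => rfl))
  · refine filter_congr fun t ht => ?_
    simp only [mem_powerset, subset_iff, mem_range] at ht
    exact forall₂_congr fun a ha => by rw [hmod a (ht ha)]
  · ext t
    have hlast : (n + 2 + 1) % (n + 3) = 0 := Nat.mod_self _
    simp only [mem_filter, mem_powerset, subset_iff, mem_range, mem_insert, mem_Ico]
    constructor
    · rintro ⟨hsub, hnc⟩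
      refine ⟨fun x hx => by linarith [hsub hx], ?_⟩
      rintro a (rfl | ha)
      · rw [hlast]
        rintro (h | h)
        · omega
        · exact absurd (hsub h).1 (by omega)
      · rw [hmod a (by linarith [hsub ha])]
        rintro (h | h)
        · linarith [hsub ha]
        · exact hnc a ha h
    · rintro ⟨hsub, hcyc⟩
      have h0 : 0 ∉ t := fun h => by simpa [hlast, h] using hcyc (n + 2) (.inl rfl)
      refine ⟨fun x hx => ⟨Nat.pos_of_ne_zero fun h => h0 (h ▸ hx), ?_⟩, fun a ha h => ?_⟩
      · have := hcyc x (.inr hx)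
        rw [hmod x (hsub hx)] at this
        have := hsub hx
        omega
      · have := hcyc a (.inr ha)
        rw [hmod a (hsub ha)] at this
        exact this (.inr h)

lemma Sym2.map_inl_ne_map_inr {V W : Type*} (e : Sym2 V) (f : Sym2 W) :
    e.map (Sum.inl : V → V ⊕ W) ≠ f.map Sum.inr := by
  induction e; induction f; simp

namespace SimpleGraph

variable {V W : Type*}

def IsMatchingSet (G : SimpleGraph V) (s : Set (Sym2 V)) : Prop :=
  s ⊆ G.edgeSet ∧ s.Pairwise fun e f => ∀ v ∈ e, v ∉ f

lemma isMatchingSet_image_iff {G : SimpleGraph V} {G' : SimpleGraph W} (φ : G ↪g G')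
    (s : Set (Sym2 V)) : G'.IsMatchingSet (Sym2.map φ '' s) ↔ G.IsMatchingSet s := by
  have disjoint_map_iff : Function.onFun (fun e f : Sym2 W => ∀ w ∈ e, w ∉ f) (Sym2.map φ) =
      fun e f => ∀ v ∈ e, v ∉ f := by
    ext e f
    simp only [Function.onFun, Sym2.mem_map, forall_exists_index, and_imp,
      forall_apply_eq_imp_iff₂, not_exists, not_and, φ.injective.eq_iff]
    grind
  rw [IsMatchingSet, IsMatchingSet, Set.image_subset_iff, Embedding.preimage_edgeSet,
    (Sym2.map.injective φ.injective).injOn.pairwise_image, disjoint_map_iff]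

lemma isMatchingSet_sum_iff {G : SimpleGraph V} {H : SimpleGraph W} (s : Set (Sym2 V))
    (t : Set (Sym2 W)) :
    (G ⊕g H).IsMatchingSet (Sym2.map Sum.inl '' s ∪ Sym2.map Sum.inr '' t) ↔
      G.IsMatchingSet s ∧ H.IsMatchingSet t := by
  rw [← isMatchingSet_image_iff (Embedding.sumInl (H := H)) s,
    ← isMatchingSet_image_iff (Embedding.sumInr (G := G)) t]
  have cross : ∀ e ∈ Sym2.map Sum.inl '' s, ∀ f ∈ Sym2.map Sum.inr '' t, e ≠ f →
      (∀ v ∈ e, v ∉ f) ∧ ∀ v ∈ f, v ∉ e := by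
    rintro _ ⟨e, -, rfl⟩ _ ⟨f, -, rfl⟩ -
    simp [Sym2.mem_map]
  simp only [IsMatchingSet, Set.union_subset_iff, Set.pairwise_union]
  exact ⟨fun h => ⟨⟨h.1.1, h.2.1⟩, h.1.2, h.2.2.1⟩,
    fun h => ⟨⟨h.1.1, h.2.1⟩, h.1.2, h.2.2, cross⟩⟩

lemma edgeSet_sum_subset (G : SimpleGraph V) (H : SimpleGraph W) :
    (G ⊕g H).edgeSet ⊆ Set.range (Sum.elim (Sym2.map Sum.inl) (Sym2.map Sum.inr)) := by
  intro e he
  induction e with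
  | _ u v =>
    cases u <;> cases v <;> simp at he
    · exact ⟨.inl s(_, _), rfl⟩
    · exact ⟨.inr s(_, _), rfl⟩

variable [Fintype V] [Fintype W]

open scoped Classical in
noncomputable def matchingPoly (G : SimpleGraph V) : ℚ[X] :=
  ∑ s ∈ univ.filter fun s : Finset (Sym2 V) => G.IsMatchingSet ↑s, X ^ #s

lemma coeff_matchingPoly (G : SimpleGraph V) (m : ℕ) :
    G.matchingPoly.coeff m = matchCount G m := by
  classical
  simp only [matchingPoly, matchCount, finsetSum_coeff, coeff_X_pow, sum_boole, filter_filter]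
  congr 2
  ext s
  simp only [mem_filter, mem_univ, true_and, mem_powersetCard, subset_univ, IsMatchingSet,
    Set.Pairwise, mem_coe, Set.subset_def]
  tauto

open scoped Classical in
lemma matchingPoly_eq_sum_powerset {ι : Type*} (G : SimpleGraph V) (I : Finset ι)
    (e : ι → Sym2 V) (he : Set.InjOn e I) (hG : G.edgeSet ⊆ e '' I) :
    G.matchingPoly =
      ∑ t ∈ I.powerset.filter fun t : Finset ι => G.IsMatchingSet (e '' ↑t), X ^ #t := by
  have supp : univ.filter (fun s : Finset (Sym2 V) => G.IsMatchingSet ↑s) =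
      (I.image e).powerset.filter fun s : Finset (Sym2 V) => G.IsMatchingSet ↑s := by
    ext s
    simp only [mem_filter, mem_univ, true_and, mem_powerset, iff_and_self]
    exact fun hs => by simpa [← coe_subset] using hs.1.trans hG
  rw [matchingPoly, supp, sum_filter, sum_powerset_image he, sum_filter]
  refine sum_congr rfl fun t ht => ?_
  rw [coe_image, card_image_of_injOn (he.mono (mem_powerset.1 ht))]

lemma matchingPoly_sum (G : SimpleGraph V) (H : SimpleGraph W) :
    (G ⊕g H).matchingPoly = G.matchingPoly * H.matchingPoly := by
  classical
  let e : Sym2 V ⊕ Sym2 W → Sym2 (V ⊕ W) := Sum.elim (Sym2.map Sum.inl) (Sym2.map Sum.inr)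
  have he : Function.Injective e := (Sym2.map.injective Sum.inl_injective).sumElim
    (Sym2.map.injective Sum.inr_injective) Sym2.map_inl_ne_map_inr
  have image_disjSum (u : Finset (Sym2 V)) (v : Finset (Sym2 W)) :
      e '' (u.disjSum v : Set _) = Sym2.map Sum.inl '' u ∪ Sym2.map Sum.inr '' v := by
    ext x; simp [e, mem_disjSum]
  rw [matchingPoly_eq_sum_powerset _ univ e he.injOn
    (by simpa [e] using edgeSet_sum_subset G H),
    matchingPoly, matchingPoly, sum_mul_sum, ← sum_product']
  refine sum_nbij' (fun T : Finset (Sym2 V ⊕ Sym2 W) => (T.toLeft, T.toRight))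
    (fun p => p.1.disjSum p.2) ?_ ?_ ?_ ?_ ?_
  · intro T hT
    have hT := (mem_filter.1 hT).2
    rw [← toLeft_disjSum_toRight (u := T), image_disjSum, isMatchingSet_sum_iff] at hT
    simpa using hT
  · rintro ⟨u, v⟩ huv
    simp only [mem_product, mem_filter, mem_univ, true_and] at huv
    simpa [image_disjSum, isMatchingSet_sum_iff] using huv
  · intro T _; exact toLeft_disjSum_toRight
  · rintro ⟨u, v⟩ _; simp
  · intro T _
    rw [← pow_add, card_toLeft_add_card_toRight]

lemma injective_sym2_self_add_one (n : ℕ) :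
    Function.Injective fun a : Fin (n + 3) => s(a, a + 1) := by
  intro a b h
  rcases Sym2.eq_iff.1 h with ⟨hab, -⟩ | ⟨hab, hba⟩
  · exact hab
  · have two_eq_zero : (1 + 1 : Fin (n + 3)) = 0 := by
      rw [← add_eq_left (a := b), ← add_assoc, ← hab, hba]
    simp [Fin.ext_iff, Fin.val_add, Nat.mod_eq_of_lt] at two_eq_zero

lemma edgeSet_cycleGraph (n : ℕ) :
    (cycleGraph (n + 3)).edgeSet = Set.range fun a : Fin (n + 3) => s(a, a + 1) := by
  ext e
  induction e with
  | _ u v =>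
    simp only [mem_edgeSet, cycleGraph_adj, sub_eq_iff_eq_add, Set.mem_range, Sym2.eq_iff,
      exists_or, exists_eq_left]
    grind

lemma isMatchingSet_cycleGraph_image_iff (n : ℕ) (T : Set (Fin (n + 3))) :
    (cycleGraph (n + 3)).IsMatchingSet ((fun a => s(a, a + 1)) '' T) ↔
      ∀ a ∈ T, a + 1 ∉ T := by
  have disjoint_iff (a b : Fin (n + 3)) (hab : a ≠ b) :
      (∀ v ∈ s(a, a + 1), v ∉ s(b, b + 1)) ↔ b ≠ a + 1 ∧ a ≠ b + 1 := by
    simp [Sym2.mem_iff, hab, hab.symm, eq_comm (a := a + 1), and_comm]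
  rw [IsMatchingSet, edgeSet_cycleGraph, (injective_sym2_self_add_one n).injOn.pairwise_image]
  simp only [Set.image_subset_range, true_and]
  constructor
  · intro h a ha ha1
    exact ((disjoint_iff a (a + 1) (by simp)).1 (h ha ha1 (by simp))).1 rfl
  · intro h a ha b hb hab
    exact (disjoint_iff a b hab).2 ⟨fun e => h a ha (e ▸ hb), fun e => h b hb (e ▸ ha)⟩

lemma matchingPoly_cycleGraph (n : ℕ) : (cycleGraph (n + 3)).matchingPoly = qpoly (n + 3) := by
  have hrange : range (n + 3) = (univ : Finset (Fin (n + 3))).image Fin.val := by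
    rw [← Nat.Iio_eq_range, ← Fin.map_valEmbedding_univ, map_eq_image]; rfl
  have hsucc (a : Fin (n + 3)) : ((a + 1 : Fin (n + 3)) : ℕ) = (a + 1) % (n + 3) := by
    rw [Fin.val_add, Fin.val_one]
  rw [matchingPoly_eq_sum_powerset _ univ _ (injective_sym2_self_add_one n).injOn
    (by simp [edgeSet_cycleGraph]), qpoly_eq_sum_cyclic, hrange, sum_filter,
    sum_filter, sum_powerset_image Fin.val_injective.injOn]
  refine sum_congr rfl fun T _ => ?_
  rw [isMatchingSet_cycleGraph_image_iff, card_image_of_injective _ Fin.val_injective]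
  congr 1
  simp [← hsucc, Fin.val_inj]

end SimpleGraph

theorem odd_cycles_merge_general (i j : ℕ) (h3 : 3 ≤ i) (hij : i ≤ j) (hi : Odd i) :
    (∀ m : ℕ, (qpoly i * qpoly j).coeff m ≤ (qpoly (i + j)).coeff m) ∧
    (∀ m : ℕ,
      matchCount (SimpleGraph.cycleGraph i ⊕g SimpleGraph.cycleGraph j) m ≤
        matchCount (SimpleGraph.cycleGraph (i + j)) m) := by
  refine ⟨coeff_qpoly_mul_qpoly_le hij hi, fun m => ?_⟩
  obtain ⟨a, rfl⟩ : ∃ a, i = a + 3 := ⟨i - 3, by omega⟩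
  obtain ⟨b, rfl⟩ : ∃ b, j = b + 3 := ⟨j - 3, by omega⟩
  obtain ⟨c, hc⟩ : ∃ c, a + 3 + (b + 3) = c + 3 := ⟨a + b + 3, by omega⟩
  have hcoeff := coeff_qpoly_mul_qpoly_le hij hi m
  rw [hc] at hcoeff ⊢
  rwa [← Nat.cast_le (α := ℚ), ← SimpleGraph.coeff_matchingPoly,
    ← SimpleGraph.coeff_matchingPoly, SimpleGraph.matchingPoly_sum,
    SimpleGraph.matchingPoly_cycleGraph, SimpleGraph.matchingPoly_cycleGraph,
    SimpleGraph.matchingPoly_cycleGraph]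

/-- For odd `3 ≤ i ≤ j`, every coefficient of `q_i q_j` is at most the corresponding
coefficient of `q_{i+j}`.  Consequently, `φ(m, C_i ∪ C_j) ≤ φ(m, C_{i+j})` for all `m`. -/
theorem odd_cycles_merge (i j : ℕ) (h3 : 3 ≤ i) (hij : i ≤ j) (hi : Odd i) (hj : Odd j) :
    (∀ m : ℕ, (qpoly i * qpoly j).coeff m ≤ (qpoly (i + j)).coeff m) ∧
    (∀ m : ℕ,
      matchCount (SimpleGraph.cycleGraph i ⊕g SimpleGraph.cycleGraph j) m ≤
        matchCount (SimpleGraph.cycleGraph (i + j)) m) :=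
  odd_cycles_merge_general i j h3 hij hi
end

section
/- Let n ≥ 4 be even and G a 2-regular bipartite (multi)graph on n vertices, i.e., a disjoint union of even cycles of total length n. Then for every m, φ(m,G) ≥ φ(m,C_n), with equality for all m if and only if G = C_n. -/
open Polynomial
lemma hq (k : ℕ) : qpoly (k+2) = qpoly (k+1) + X * qpoly k := rfl

lemma qkey : ∀ b a, qpoly (a + b) * qpoly b = qpoly (a + 2*b) + (-X : ℚ[X])^b * qpoly a := by
  intro b
  induction b using Nat.twoStepInduction with
  | zero =>
    intro a
    show qpoly (a+0) * 2 = _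
    simp
    ring
  | one =>
    intro a
    show qpoly (a+1) * 1 = qpoly (a + 2*1) + (-X)^1 * qpoly a
    rw [show a + 2*1 = a + 2 from by ring, hq a]
    ring
  | more b ih1 ih2 =>
    intro a
    rw [show a + (b+2) = (a+1)+(b+1) from by omega, hq b, mul_add, ih2 (a+1),
      show (a+1)+(b+1) = (a+2)+b from by omega, mul_left_comm, ih1 (a+2),
      show (a+1)+2*(b+1) = a+2*b+3 from by omega,
      show (a+2)+2*b = a+2*b+2 from by omega,
      show a + 2*(b+2) = (a+2*b+2)+2 from by omega,
      hq (a+2*b+2), hq a,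
      show a+2*b+2+1 = a+2*b+3 from by omega]
    ring

lemma qkey_even (b a : ℕ) (hb : Even b) :
    qpoly (a + b) * qpoly b = qpoly (a + 2*b) + (X : ℚ[X])^b * qpoly a := by
  rw [qkey b a, hb.neg_pow]

lemma qnonneg (k m : ℕ) : 0 ≤ (qpoly k).coeff m := by
  induction k using Nat.twoStepInduction generalizing m with
  | zero =>
    show 0 ≤ (2 : ℚ[X]).coeff m
    rcases m with _ | m
    · rw [coeff_ofNat_zero]; norm_num
    · rw [coeff_ofNat_succ]
  | one =>
    show 0 ≤ (1 : ℚ[X]).coeff m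
    rw [coeff_one]
    split <;> norm_num
  | more k ih1 ih2 =>
    rw [hq, coeff_add]
    have h2 : 0 ≤ (X * qpoly k).coeff m := by
      rcases m with _ | m
      · simp
      · rw [coeff_X_mul]; exact ih1 m
    exact add_nonneg (ih2 m) h2

lemma qcoeff0 (k : ℕ) : 1 ≤ (qpoly k).coeff 0 := by
  induction k using Nat.twoStepInduction with
  | zero =>
    show (1:ℚ) ≤ (2 : ℚ[X]).coeff 0
    rw [coeff_ofNat_zero]; norm_num
  | one =>
    show (1:ℚ) ≤ (1 : ℚ[X]).coeff 0
    rw [coeff_one_zero]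
  | more k ih1 ih2 =>
    rw [hq, coeff_add]
    have : (X * qpoly k).coeff 0 = 0 := by simp
    rw [this, add_zero]; exact ih2

lemma prod_nonneg (L : Multiset ℕ) (m : ℕ) : 0 ≤ ((L.map qpoly).prod).coeff m := by
  induction L using Multiset.induction generalizing m with
  | empty =>
    simp [Polynomial.coeff_one]
    positivity
  | cons a T ih =>
    rw [Multiset.map_cons, Multiset.prod_cons, coeff_mul]
    exact Finset.sum_nonneg fun x _ => mul_nonneg (qnonneg a x.1) (ih x.2)

lemma prod_coeff0 (L : Multiset ℕ) : 1 ≤ ((L.map qpoly).prod).coeff 0 := by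
  induction L using Multiset.induction with
  | empty => simp
  | cons a T ih =>
    rw [Multiset.map_cons, Multiset.prod_cons, mul_coeff_zero]
    calc (1:ℚ) = 1 * 1 := by ring
    _ ≤ (qpoly a).coeff 0 * ((T.map qpoly).prod).coeff 0 :=
      mul_le_mul (qcoeff0 a) ih (by norm_num) ((qcoeff0 a).trans (le_refl _) |>.trans' (by norm_num))

lemma mul_coeff_le {p q r : ℚ[X]} (hpq : ∀ m, p.coeff m ≤ q.coeff m)
    (hr : ∀ m, 0 ≤ r.coeff m) (m : ℕ) : (p * r).coeff m ≤ (q * r).coeff m := by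
  rw [coeff_mul, coeff_mul]
  exact Finset.sum_le_sum fun x _ => mul_le_mul_of_nonneg_right (hpq x.1) (hr x.2)

/-- combining lemma: for even a,b, coefficients of `q_a * q_b` dominate those of `q_{a+b}`. -/
lemma qmul_ge (a b : ℕ) (hb : Even b) (hab : b ≤ a) (m : ℕ) :
    (qpoly (a + b)).coeff m ≤ (qpoly a * qpoly b).coeff m := by
  have h := qkey_even b (a - b) hb
  rw [show a - b + b = a from by omega, show a - b + 2*b = a + b from by omega] at h
  rw [h, coeff_add]
  have : 0 ≤ ((X:ℚ[X])^b * qpoly (a-b)).coeff m := by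
    rw [coeff_mul]
    refine Finset.sum_nonneg fun x _ => mul_nonneg ?_ (qnonneg _ _)
    rw [coeff_X_pow]
    split <;> norm_num
  linarith

lemma part1 : ∀ N L, Multiset.card L ≤ N → L ≠ 0 → (∀ l ∈ L, Even l) →
    ∀ m, (qpoly L.sum).coeff m ≤ ((L.map qpoly).prod).coeff m := by
  intro N
  induction N with
  | zero =>
    intro L hc hne _
    exact absurd (Multiset.card_eq_zero.mp (Nat.le_zero.mp hc)) hne
  | succ N ih =>
    intro L hc hne hev m
    obtain ⟨a, ha⟩ := Multiset.exists_mem_of_ne_zero hne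
    obtain ⟨T1, rfl⟩ := Multiset.exists_cons_of_mem ha
    rcases eq_or_ne T1 0 with rfl | hT1
    · simp
    obtain ⟨b, hb⟩ := Multiset.exists_mem_of_ne_zero hT1
    obtain ⟨T, rfl⟩ := Multiset.exists_cons_of_mem hb
    -- wlog b ≤ a
    have key : ∀ a b : ℕ, b ≤ a → Even a → Even b → (∀ l ∈ T, Even l) →
        Multiset.card (a ::ₘ b ::ₘ T) ≤ N + 1 →
        (qpoly (a ::ₘ b ::ₘ T).sum).coeff m ≤ (((a ::ₘ b ::ₘ T).map qpoly).prod).coeff m := by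
      intro a b hba hea heb hT hcard
      have hL' : ((a+b) ::ₘ T) ≠ 0 := by simp
      have hcard' : Multiset.card ((a+b) ::ₘ T) ≤ N := by
        simp only [Multiset.card_cons] at hcard ⊢; omega
      have hev' : ∀ l ∈ (a+b) ::ₘ T, Even l := by
        intro l hl
        rcases Multiset.mem_cons.mp hl with rfl | hl
        · exact hea.add heb
        · exact hT l hl
      have step1 := ih _ hcard' hL' hev' m
      have hsum : (a ::ₘ b ::ₘ T).sum = ((a+b) ::ₘ T).sum := by
        simp [Multiset.sum_cons]; ring
      rw [hsum]
      refine step1.trans ?_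
      rw [Multiset.map_cons, Multiset.prod_cons, Multiset.map_cons, Multiset.map_cons,
        Multiset.prod_cons, Multiset.prod_cons, ← mul_assoc]
      exact mul_coeff_le (qmul_ge a b heb hba) (prod_nonneg T) m
    have hea : Even a := hev a (Multiset.mem_cons_self _ _)
    have heb : Even b := hev b (Multiset.mem_cons_of_mem (Multiset.mem_cons_self _ _))
    have hT : ∀ l ∈ T, Even l := fun l hl =>
      hev l (Multiset.mem_cons_of_mem (Multiset.mem_cons_of_mem hl))
    rcases le_total b a with h | h
    · exact key a b h hea heb hT hc
    · rw [Multiset.cons_swap]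
      refine key b a h heb hea hT ?_
      rw [Multiset.cons_swap]; exact hc

/-- Let `n ≥ 4` be even and let `G` be a 2-regular bipartite multigraph on `n`
vertices, i.e. a disjoint union of even cycles (of length ≥ 2) with total length `n`,
encoded by the multiset `L` of its cycle lengths.  Since matching generating
polynomials multiply over disjoint unions, `Φ_G = ∏_{l ∈ L} q_l`.  Then every
coefficient of `Φ_G` is at least the corresponding coefficient of `q_n = Φ_{C_n}`,
with equality for all `m` if and only if `G = C_n`, i.e. `L = {n}`. -/
theorem even_cycle_union_min (n : ℕ) (hn : 4 ≤ n) (hne : Even n)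
    (L : Multiset ℕ) (hL : ∀ l ∈ L, Even l ∧ 2 ≤ l) (hsum : L.sum = n) :
    (∀ m : ℕ, (qpoly n).coeff m ≤ ((L.map qpoly).prod).coeff m) ∧
    ((∀ m : ℕ, ((L.map qpoly).prod).coeff m = (qpoly n).coeff m) ↔ L = {n}) := by
  have hLne : L ≠ 0 := by
    rintro rfl; simp at hsum; omega
  have hev : ∀ l ∈ L, Even l := fun l hl => (hL l hl).1
  have hpart1 : ∀ m : ℕ, (qpoly n).coeff m ≤ ((L.map qpoly).prod).coeff m := by
    intro m
    have := part1 (Multiset.card L) L (le_refl _) hLne hev m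
    rwa [hsum] at this
  refine ⟨hpart1, ?_, ?_⟩
  · -- equality → L = {n}
    intro heq
    by_contra hne'
    -- L has at least two elements
    obtain ⟨a, ha⟩ := Multiset.exists_mem_of_ne_zero hLne
    obtain ⟨T1, rfl⟩ := Multiset.exists_cons_of_mem ha
    rcases eq_or_ne T1 0 with rfl | hT1
    · simp only [Multiset.sum_cons, Multiset.sum_zero, add_zero] at hsum
      exact hne' (by rw [hsum]; rfl)
    obtain ⟨b, hb⟩ := Multiset.exists_mem_of_ne_zero hT1
    obtain ⟨T, rfl⟩ := Multiset.exists_cons_of_mem hb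
    -- wlog min
    have main : ∀ a b : ℕ, b ≤ a → Even a → Even b → (∀ l ∈ T, Even l) →
        (a ::ₘ b ::ₘ T).sum = n →
        (qpoly n).coeff b < (((a ::ₘ b ::ₘ T).map qpoly).prod).coeff b := by
      intro a b hba hea heb hT hs
      have hL' : ((a+b) ::ₘ T) ≠ 0 := by simp
      have hev' : ∀ l ∈ (a+b) ::ₘ T, Even l := by
        intro l hl
        rcases Multiset.mem_cons.mp hl with rfl | hl
        · exact hea.add heb
        · exact hT l hl
      have hs' : ((a+b) ::ₘ T).sum = n := by
        rw [← hs]; simp [Multiset.sum_cons]; ring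
      have step1 : (qpoly n).coeff b ≤ ((((a+b) ::ₘ T).map qpoly).prod).coeff b := by
        have := part1 (Multiset.card ((a+b) ::ₘ T)) _ (le_refl _) hL' hev' b
        rwa [hs'] at this
      -- identity
      have hid := qkey_even b (a - b) heb
      rw [show a - b + b = a from by omega, show a - b + 2*b = a + b from by omega] at hid
      have hexp : (((a ::ₘ b ::ₘ T).map qpoly).prod)
          = ((((a+b) ::ₘ T).map qpoly).prod) + ((X:ℚ[X])^b * qpoly (a-b)) * (T.map qpoly).prod := by
        simp only [Multiset.map_cons, Multiset.prod_cons]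
        rw [← mul_assoc, hid]
        ring
      have hpos : (1:ℚ) ≤ (((X:ℚ[X])^b * qpoly (a-b)) * (T.map qpoly).prod).coeff b := by
        rw [mul_assoc]
        have := coeff_X_pow_mul (qpoly (a-b) * (T.map qpoly).prod) b 0
        rw [zero_add] at this
        rw [this, mul_coeff_zero]
        calc (1:ℚ) = 1 * 1 := by ring
        _ ≤ _ := mul_le_mul (qcoeff0 _) (prod_coeff0 T) (by norm_num)
              (le_trans (by norm_num) (qcoeff0 _))
      rw [hexp, coeff_add]
      linarith
    have hea : Even a := (hL a (Multiset.mem_cons_self _ _)).1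
    have heb : Even b := (hL b (Multiset.mem_cons_of_mem (Multiset.mem_cons_self _ _))).1
    have hT : ∀ l ∈ T, Even l := fun l hl =>
      (hL l (Multiset.mem_cons_of_mem (Multiset.mem_cons_of_mem hl))).1
    rcases le_total b a with h | h
    · have := main a b h hea heb hT hsum
      rw [heq b] at this
      exact lt_irrefl _ this
    · have hs2 : (b ::ₘ a ::ₘ T).sum = n := by rw [← hsum]; simp [Multiset.sum_cons]; ring
      have := main b a h heb hea hT hs2
      rw [← Multiset.cons_swap, heq a] at this
      exact lt_irrefl _ this
  · rintro rfl
    simp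
end

section
/- For any r-regular bipartite graph G on 2n vertices (r ≥ 2), the number of 3-matchings is φ(3,G) = C(nr,3) − 2n·C(r,3) − nr(r−1)^2 − 2n·C(r,2)·(nr − 2r − (r−2)). In particular, φ(3,G) depends only on n and r. -/
/-!
Count the ordered triples of pairwise vertex-disjoint edges: there are `6 φ(3,G)` of them. Let
`m = nr` be the number of edges. Every edge meets `2r - 1` edges (itself included), so there are
`m (m - 2r + 1)` ordered pairs `(e, f)` of disjoint edges, and by inclusion–exclusion
`m - 2 (2r - 1) + c(e, f)` edges are disjoint from both, where `c(e, f)` counts the edges meeting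
both. Summing `c` over all pairs counts, for every edge `uv`, the ordered pairs of disjoint edges
with one through `u` and the other through `v`; since a bipartite graph has no triangle, any edge at
`u` and any edge at `v` other than `uv` are disjoint, so there are `2 (r - 1)²` of them. Hence
`6 φ(3,G) = m (m - 2r + 1)(m - 4r + 2) + 2m (r - 1)²`.
-/

open Finset

namespace Finset

variable {α β : Type*}

theorem card_filter_product_eq_sum_right (s : Finset α) (t : Finset β) (p : α × β → Prop)
    [DecidablePred p] : #{x ∈ s ×ˢ t | p x} = ∑ b ∈ t, #{a ∈ s | p (a, b)} := by
  simp only [card_filter, sum_product_right]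

theorem card_filter_and_add_card_filter_not_add_card_filter_not [DecidableEq α] (s : Finset α)
    (p q : α → Prop) [DecidablePred p] [DecidablePred q] :
    #{x ∈ s | p x ∧ q x} + #{x ∈ s | ¬p x} + #{x ∈ s | ¬q x} =
      #s + #{x ∈ s | ¬p x ∧ ¬q x} := by
  have hunion := card_union_add_card_inter {x ∈ s | ¬p x} {x ∈ s | ¬q x}
  have hcompl := card_filter_add_card_filter_not (s := s) (fun x => p x ∧ q x)
  rw [← filter_or, ← filter_and] at hunion
  simp only [not_and_or] at hcompl
  omega

theorem card_filter_pairwise_ne_triple [DecidableEq α] (s : Finset α) :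
    #{x ∈ s ×ˢ s ×ˢ s | x.1 ≠ x.2.1 ∧ x.1 ≠ x.2.2 ∧ x.2.1 ≠ x.2.2} =
      #s * (#s - 1) * (#s - 2) := by
  have hfiber : ∀ a ∈ s,
      #{q ∈ s ×ˢ s | a ≠ q.1 ∧ a ≠ q.2 ∧ q.1 ≠ q.2} = (#s - 1) * (#s - 2) := by
    intro a ha
    have : {q ∈ s ×ˢ s | a ≠ q.1 ∧ a ≠ q.2 ∧ q.1 ≠ q.2} = (s.erase a).offDiag := by
      ext q
      simp only [mem_filter, mem_product, mem_offDiag, mem_erase]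
      tauto
    rw [this, offDiag_card, card_erase_of_mem ha, ← Nat.mul_sub_one, Nat.sub_sub]
  rw [mul_assoc, ← sum_const_nat hfiber, card_filter, sum_product]
  simp only [card_filter]

theorem six_mul_card_filter_powersetCard_three [DecidableEq α] (R : α → α → Prop)
    [DecidableRel R] (hsymm : ∀ a b, R a b → R b a) (hirr : ∀ a, ¬R a a) (s : Finset α) :
    6 * #{t ∈ s.powersetCard 3 | ∀ a ∈ t, ∀ b ∈ t, a ≠ b → R a b} =
      #{x ∈ s ×ˢ s ×ˢ s | R x.1 x.2.1 ∧ R x.1 x.2.2 ∧ R x.2.1 x.2.2} := by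
  set M := {t ∈ s.powersetCard 3 | ∀ a ∈ t, ∀ b ∈ t, a ≠ b → R a b}
  set T := {x ∈ s ×ˢ s ×ˢ s | R x.1 x.2.1 ∧ R x.1 x.2.2 ∧ R x.2.1 x.2.2}
  have hne : ∀ {a b}, R a b → a ≠ b := fun h hab => hirr _ (hab ▸ h)
  have hmaps : ∀ x ∈ T, ({x.1, x.2.1, x.2.2} : Finset α) ∈ M := by
    rintro ⟨a, b, c⟩ hx
    simp only [T, M, mem_filter, mem_product, mem_powersetCard] at hx ⊢
    obtain ⟨⟨ha, hb, hc⟩, hab, hac, hbc⟩ := hx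
    refine ⟨⟨by simp [insert_subset_iff, ha, hb, hc],
      card_eq_three.mpr ⟨a, b, c, hne hab, hne hac, hne hbc, rfl⟩⟩, ?_⟩
    simp only [mem_insert, mem_singleton]
    rintro x (rfl | rfl | rfl) y (rfl | rfl | rfl) hxy <;>
      first | exact absurd rfl hxy | assumption | exact hsymm _ _ ‹_›
  have hfiber : ∀ t ∈ M, #{x ∈ T | ({x.1, x.2.1, x.2.2} : Finset α) = t} = 6 := by
    intro t ht
    simp only [M, mem_filter, mem_powersetCard] at ht
    obtain ⟨⟨hts, ht3⟩, htR⟩ := ht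
    rw [← show #t * (#t - 1) * (#t - 2) = 6 by rw [ht3], ← card_filter_pairwise_ne_triple]
    congr 1
    ext ⟨a, b, c⟩
    simp only [T, mem_filter, mem_product]
    constructor
    · rintro ⟨⟨-, hab, hac, hbc⟩, rfl⟩
      simp [hne hab, hne hac, hne hbc]
    · rintro ⟨⟨ha, hb, hc⟩, hab, hac, hbc⟩
      refine ⟨⟨⟨hts ha, hts hb, hts hc⟩, htR a ha b hb hab, htR a ha c hc hac,
        htR b hb c hc hbc⟩, eq_of_subset_of_card_le ?_ ?_⟩
      · simp [insert_subset_iff, ha, hb, hc]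
      · rw [ht3, card_eq_three.mpr ⟨a, b, c, hab, hac, hbc, rfl⟩]
  rw [card_eq_sum_card_fiberwise hmaps, sum_congr rfl hfiber, sum_const, smul_eq_mul, mul_comm]

end Finset

theorem Nat.two_mul_cast_choose_two (k : ℕ) : 2 * (k.choose 2 : ℤ) = k * (k - 1) := by
  rw [show (2 : ℤ) = ((Nat.factorial 2 : ℕ) : ℤ) by rfl, ← Nat.cast_mul,
    ← Nat.descFactorial_eq_factorial_mul_choose, Nat.cast_descFactorial_two]

theorem Nat.six_mul_cast_choose_three (k : ℕ) :
    6 * (k.choose 3 : ℤ) = k * (k - 1) * (k - 2) := by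
  induction k with
  | zero => simp
  | succ k ih =>
    rw [Nat.choose_succ_succ', Nat.cast_add, mul_add, ih]
    push_cast
    linear_combination 3 * Nat.two_mul_cast_choose_two k

theorem Sym2.disjoint_toFinset_mk_iff {α : Type*} [DecidableEq α] {a b : α} {z : Sym2 α} :
    Disjoint s(a, b).toFinset z.toFinset ↔ a ∉ z ∧ b ∉ z := by
  simp [Sym2.toFinset_mk_eq, Sym2.mem_toFinset]

namespace SimpleGraph

variable {V : Type*} [DecidableEq V] {G : SimpleGraph V} {a b : V}

theorem CliqueFree.disjoint_toFinset_of_adj (hG : G.CliqueFree 3) (hab : G.Adj a b)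
    {e f : Sym2 V} (he : e ∈ G.edgeSet) (hf : f ∈ G.edgeSet) (hae : a ∈ e) (hbe : b ∉ e)
    (hbf : b ∈ f) (haf : a ∉ f) : Disjoint e.toFinset f.toFinset := by
  obtain ⟨x, rfl⟩ := Sym2.mem_iff_exists.mp hae
  obtain ⟨y, rfl⟩ := Sym2.mem_iff_exists.mp hbf
  rw [Sym2.disjoint_toFinset_mk_iff]
  refine ⟨haf, fun hx => ?_⟩
  obtain rfl | rfl := Sym2.mem_iff.mp hx
  · exact hbe (Sym2.mem_mk_right _ _)
  · exact hG {a, b, x} (is3Clique_triple_iff.mpr ⟨hab, he, hf⟩)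

variable [Fintype V] [DecidableRel G.Adj]

variable (G) in
def disjointEdgePairs : Finset (Sym2 V × Sym2 V) :=
  {q ∈ G.edgeFinset ×ˢ G.edgeFinset | Disjoint q.1.toFinset q.2.toFinset}

variable (G) in
def disjointEdgeTriples : Finset (Sym2 V × Sym2 V × Sym2 V) :=
  {x ∈ G.edgeFinset ×ˢ G.edgeFinset ×ˢ G.edgeFinset | Disjoint x.1.toFinset x.2.1.toFinset ∧
    Disjoint x.1.toFinset x.2.2.toFinset ∧ Disjoint x.2.1.toFinset x.2.2.toFinset}

theorem matchCount_eq_card_filter (m : ℕ) :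
    matchCount G m = #{t ∈ G.edgeFinset.powersetCard m |
      ∀ e ∈ t, ∀ f ∈ t, e ≠ f → Disjoint e.toFinset f.toFinset} := by
  rw [matchCount]
  congr 1
  ext t
  simp only [mem_filter, mem_powersetCard, subset_iff, mem_univ, implies_true, true_and,
    mem_edgeFinset, Finset.disjoint_left, Sym2.mem_toFinset]
  tauto

theorem card_disjointEdgeTriples_eq_six_mul_matchCount :
    #G.disjointEdgeTriples = 6 * matchCount G 3 := by
  rw [matchCount_eq_card_filter, disjointEdgeTriples]
  convert (six_mul_card_filter_powersetCard_three
    (fun e f : Sym2 V => Disjoint e.toFinset f.toFinset) (fun _ _ h => h.symm)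
    (fun e h => e.toFinset_ne_empty (disjoint_self_iff_empty _ |>.mp h)) G.edgeFinset).symm using 3
  ext t
  simp only [mem_filter]

theorem card_disjointEdgeTriples_eq_sum :
    #G.disjointEdgeTriples = ∑ q ∈ G.disjointEdgePairs, #{g ∈ G.edgeFinset |
      Disjoint g.toFinset q.1.toFinset ∧ Disjoint g.toFinset q.2.toFinset} := by
  rw [disjointEdgeTriples, card_filter_product_eq_sum_right, disjointEdgePairs, sum_filter]
  refine sum_congr rfl fun q _ => ?_
  split_ifs with hq <;> simp [hq]

theorem filter_edgeFinset_mem_and_mem (hab : G.Adj a b) :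
    {e ∈ G.edgeFinset | a ∈ e ∧ b ∈ e} = {s(a, b)} := by
  ext e
  rw [mem_filter, Sym2.mem_and_mem_iff hab.ne, mem_singleton, and_iff_right_iff_imp]
  rintro rfl
  exact mem_edgeFinset.mpr hab

theorem card_filter_edgeFinset_not_disjoint_add_one (hab : G.Adj a b) :
    #{f ∈ G.edgeFinset | ¬Disjoint f.toFinset s(a, b).toFinset} + 1 =
      G.degree a + G.degree b := by
  have hsplit : {f ∈ G.edgeFinset | ¬Disjoint f.toFinset s(a, b).toFinset} =
      {f ∈ G.edgeFinset | a ∈ f} ∪ {f ∈ G.edgeFinset | b ∈ f} := by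
    rw [← filter_or]
    refine filter_congr fun f _ => ?_
    rw [disjoint_comm, Sym2.disjoint_toFinset_mk_iff, not_and_or, not_not, not_not]
  rw [hsplit, ← card_singleton s(a, b), ← filter_edgeFinset_mem_and_mem hab, filter_and,
    card_union_add_card_inter, ← card_incidenceFinset_eq_degree,
    ← card_incidenceFinset_eq_degree, incidenceFinset_eq_filter, incidenceFinset_eq_filter]

theorem card_filter_edgeFinset_mem_and_not_mem_add_one (hab : G.Adj a b) :
    #{e ∈ G.edgeFinset | a ∈ e ∧ b ∉ e} + 1 = G.degree a := by
  rw [← card_singleton s(a, b), ← filter_edgeFinset_mem_and_mem hab,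
    ← card_incidenceFinset_eq_degree, incidenceFinset_eq_filter, ← filter_filter,
    ← filter_filter, add_comm, card_filter_add_card_filter_not]

theorem CliqueFree.card_filter_disjointEdgePairs_not_disjoint (hG : G.CliqueFree 3)
    (hab : G.Adj a b) :
    #{q ∈ G.disjointEdgePairs |
        ¬Disjoint s(a, b).toFinset q.1.toFinset ∧ ¬Disjoint s(a, b).toFinset q.2.toFinset} =
      2 * ((G.degree a - 1) * (G.degree b - 1)) := by
  set Ja := {e ∈ G.edgeFinset | a ∈ e ∧ b ∉ e}
  set Jb := {e ∈ G.edgeFinset | b ∈ e ∧ a ∉ e}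
  have hsplit : {q ∈ G.disjointEdgePairs |
      ¬Disjoint s(a, b).toFinset q.1.toFinset ∧ ¬Disjoint s(a, b).toFinset q.2.toFinset} =
      Ja ×ˢ Jb ∪ Jb ×ˢ Ja := by
    ext ⟨e, f⟩
    simp only [disjointEdgePairs, Ja, Jb, mem_filter, mem_union, mem_product, mem_edgeFinset,
      Sym2.disjoint_toFinset_mk_iff, not_and_or, not_not]
    constructor
    · rintro ⟨⟨⟨he, hf⟩, hef⟩, hae | hbe, haf | hbf⟩
      all_goals
        have hmem : ∀ v, v ∈ e → v ∉ f := fun v hve hvf =>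
          Finset.disjoint_left.mp hef (Sym2.mem_toFinset.mpr hve) (Sym2.mem_toFinset.mpr hvf)
      · exact absurd haf (hmem a hae)
      · exact .inl ⟨⟨he, hae, fun hbe => hmem b hbe hbf⟩, hf, hbf, hmem a hae⟩
      · exact .inr ⟨⟨he, hbe, fun hae => hmem a hae haf⟩, hf, haf, hmem b hbe⟩
      · exact absurd hbf (hmem b hbe)
    · rintro (⟨⟨he, hae, hbe⟩, hf, hbf, haf⟩ | ⟨⟨he, hbe, hae⟩, hf, haf, hbf⟩)
      · exact ⟨⟨⟨he, hf⟩, hG.disjoint_toFinset_of_adj hab he hf hae hbe hbf haf⟩,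
          .inl hae, .inr hbf⟩
      · exact ⟨⟨⟨he, hf⟩, (hG.disjoint_toFinset_of_adj hab hf he haf hbf hbe hae).symm⟩,
          .inr hbe, .inl haf⟩
  have hdisj : Disjoint (Ja ×ˢ Jb) (Jb ×ˢ Ja) :=
    disjoint_product.mpr (.inl (disjoint_filter.mpr fun _ _ h h' => h.2 h'.1))
  have hJa := card_filter_edgeFinset_mem_and_not_mem_add_one hab
  have hJb := card_filter_edgeFinset_mem_and_not_mem_add_one hab.symm
  rw [hsplit, card_union_of_disjoint hdisj, card_product, card_product, ← hJa, ← hJb]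
  simp only [Ja, Jb, Nat.add_sub_cancel]
  ring

variable {r : ℕ}

theorem IsRegularOfDegree.card_filter_not_disjoint_add_one (hreg : G.IsRegularOfDegree r)
    {e : Sym2 V} (he : e ∈ G.edgeFinset) :
    #{f ∈ G.edgeFinset | ¬Disjoint f.toFinset e.toFinset} + 1 = 2 * r := by
  induction e using Sym2.ind with
  | _ a b =>
    rw [card_filter_edgeFinset_not_disjoint_add_one (mem_edgeFinset.mp he), hreg.degree_eq,
      hreg.degree_eq, two_mul]

theorem IsRegularOfDegree.card_disjointEdgePairs_add (hreg : G.IsRegularOfDegree r) :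
    #G.disjointEdgePairs + #G.edgeFinset * (2 * r) =
      #G.edgeFinset * #G.edgeFinset + #G.edgeFinset := by
  have hmeet : #{q ∈ G.edgeFinset ×ˢ G.edgeFinset | ¬Disjoint q.1.toFinset q.2.toFinset} +
      #G.edgeFinset = #G.edgeFinset * (2 * r) := by
    rw [card_filter_product_eq_sum_right,
      ← sum_const_nat fun e he => hreg.card_filter_not_disjoint_add_one he, sum_add_distrib,
      sum_const, smul_eq_mul, mul_one]
  have hcompl := card_filter_add_card_filter_not (s := G.edgeFinset ×ˢ G.edgeFinset)
    (fun q => Disjoint q.1.toFinset q.2.toFinset)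
  rw [card_product] at hcompl
  rw [disjointEdgePairs]
  omega

theorem IsRegularOfDegree.sum_card_filter_not_disjoint_and_not_disjoint
    (hreg : G.IsRegularOfDegree r) (hG : G.CliqueFree 3) :
    ∑ q ∈ G.disjointEdgePairs, #{g ∈ G.edgeFinset |
        ¬Disjoint g.toFinset q.1.toFinset ∧ ¬Disjoint g.toFinset q.2.toFinset} =
      #G.edgeFinset * (2 * ((r - 1) * (r - 1))) := by
  have hswap := sum_card_bipartiteAbove_eq_sum_card_bipartiteBelow (s := G.disjointEdgePairs)
    (t := G.edgeFinset)
    (fun q g => ¬Disjoint g.toFinset q.1.toFinset ∧ ¬Disjoint g.toFinset q.2.toFinset)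
  simp only [bipartiteAbove, bipartiteBelow] at hswap
  rw [hswap]
  refine sum_const_nat fun g hg => ?_
  induction g using Sym2.ind with
  | _ a b =>
    rw [hG.card_filter_disjointEdgePairs_not_disjoint (mem_edgeFinset.mp hg),
      hreg.degree_eq, hreg.degree_eq]

theorem IsRegularOfDegree.card_disjointEdgeTriples_add (hreg : G.IsRegularOfDegree r)
    (hG : G.CliqueFree 3) :
    #G.disjointEdgeTriples + 4 * r * #G.disjointEdgePairs =
      (#G.edgeFinset + 2) * #G.disjointEdgePairs + #G.edgeFinset * (2 * ((r - 1) * (r - 1))) := by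
  have hcount : ∀ q ∈ G.disjointEdgePairs,
      #{g ∈ G.edgeFinset | Disjoint g.toFinset q.1.toFinset ∧
        Disjoint g.toFinset q.2.toFinset} + 4 * r =
      (#G.edgeFinset + 2) + #{g ∈ G.edgeFinset | ¬Disjoint g.toFinset q.1.toFinset ∧
        ¬Disjoint g.toFinset q.2.toFinset} := by
    intro q hq
    obtain ⟨h1, h2⟩ := mem_product.mp (mem_filter.mp hq).1
    have hincl := card_filter_and_add_card_filter_not_add_card_filter_not G.edgeFinset
      (fun g => Disjoint g.toFinset q.1.toFinset) (fun g => Disjoint g.toFinset q.2.toFinset)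
    beta_reduce at hincl
    have h1 := hreg.card_filter_not_disjoint_add_one h1
    have h2 := hreg.card_filter_not_disjoint_add_one h2
    omega
  have hsum := sum_congr rfl hcount
  rw [sum_add_distrib, sum_add_distrib, sum_const, sum_const, smul_eq_mul, smul_eq_mul,
    hreg.sum_card_filter_not_disjoint_and_not_disjoint hG] at hsum
  rw [card_disjointEdgeTriples_eq_sum]
  linarith

theorem IsRegularOfDegree.six_mul_matchCount_three (hreg : G.IsRegularOfDegree r)
    (hG : G.CliqueFree 3) (hr : 1 ≤ r) :
    6 * (matchCount G 3 : ℤ) =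
      #G.edgeFinset * (#G.edgeFinset + 1 - 2 * r) * (#G.edgeFinset + 2 - 4 * r) +
        2 * #G.edgeFinset * (r - 1) ^ 2 := by
  have hT := hreg.card_disjointEdgeTriples_add hG
  have hD := hreg.card_disjointEdgePairs_add
  rw [card_disjointEdgeTriples_eq_six_mul_matchCount] at hT
  zify [hr] at hT hD
  linear_combination hT + ((#G.edgeFinset : ℤ) + 2 - 4 * r) * hD

end SimpleGraph

/-- For any `r`-regular bipartite graph `G` on `2n` vertices (`r ≥ 2`), the number of
3-matchings is `φ(3,G) = C(nr,3) − 2n·C(r,3) − nr(r−1)² − 2n·C(r,2)·(nr − 2r − (r−2))`;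
in particular it depends only on `n` and `r`. -/
theorem regular_bipartite_match_three {V : Type*} [Fintype V]
    (G : SimpleGraph V) [DecidableRel G.Adj] (n r : ℕ) (hr : 2 ≤ r)
    (hcard : Fintype.card V = 2 * n) (hbip : G.Colorable 2)
    (hreg : ∀ v : V, G.degree v = r) :
    (matchCount G 3 : ℤ) =
      ((n * r).choose 3 : ℤ) - 2 * n * (r.choose 3 : ℤ) - n * r * ((r : ℤ) - 1) ^ 2
        - 2 * n * (r.choose 2 : ℤ) * ((n : ℤ) * r - 2 * r - ((r : ℤ) - 2)) := by
  classical
  have hedges : #G.edgeFinset = n * r := by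
    have hsum := G.sum_degrees_eq_twice_card_edges
    simp only [hreg, sum_const, card_univ, hcard, smul_eq_mul] at hsum
    linarith
  have h6 := SimpleGraph.IsRegularOfDegree.six_mul_matchCount_three hreg
    (hbip.cliqueFree (by norm_num)) (by omega)
  rw [hedges, Nat.cast_mul] at h6
  refine mul_left_cancel₀ (show (6 : ℤ) ≠ 0 by norm_num) ?_
  have hchoose := Nat.six_mul_cast_choose_three (n * r)
  push_cast at hchoose
  linear_combination h6 - hchoose + 2 * (n : ℤ) * Nat.six_mul_cast_choose_three r +
    6 * (n : ℤ) * ((n : ℤ) * r - 2 * r - ((r : ℤ) - 2)) * Nat.two_mul_cast_choose_two r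
end

section
/- Let G be an r-regular bipartite graph on 2n vertices with r ≥ 2, and let a_4(G) denote the number of 4-cycles in G. Then a_4(G) ≤ nr(r−1)^2/4, with equality if and only if n = qr for some integer q and G is the disjoint union of q copies of K_{r,r}. -/
/-!
An ordered 4-cycle `(a, b, c, d)` is a pair `a ≠ c` together with an ordered pair of distinct
common neighbours `b, d` of `a` and `c`, so `8 a₄(G) = ∑_{a ≠ c} d(a,c) (d(a,c) - 1)`, where
`d(a,c)` is the number of common neighbours. Since `d(a,c) ≤ r` and
`∑_{a ≠ c} d(a,c) = 2n · r(r-1)` (count paths of length two through their middle vertex), this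
is at most `2n · r(r-1)²`, with equality iff every `d(a,c)` is `0` or `r`. In that case two
vertices with a common neighbour have the same neighbourhood, so every connected component
splits into two classes of `r` twins, each joined to all of the other: `G` is a disjoint union
of copies of `K_{r,r}`. Conversely, all codegrees in `q K_{r,r}` are `0` or `r`.
-/

/-- Eight times the number of (unlabeled) 4-cycles in `G`: the number of ordered
quadruples of distinct vertices `(a,b,c,d)` with `a~b`, `b~c`, `c~d`, `d~a`. -/
noncomputable def cycles4Ordered {V : Type*} [Fintype V] (G : SimpleGraph V) : ℕ := by
  classical
  exact ((Finset.univ : Finset (V × V × V × V)).filter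
    (fun p => p.1 ≠ p.2.1 ∧ p.1 ≠ p.2.2.1 ∧ p.1 ≠ p.2.2.2 ∧ p.2.1 ≠ p.2.2.1 ∧
      p.2.1 ≠ p.2.2.2 ∧ p.2.2.1 ≠ p.2.2.2 ∧
      G.Adj p.1 p.2.1 ∧ G.Adj p.2.1 p.2.2.1 ∧ G.Adj p.2.2.1 p.2.2.2 ∧
      G.Adj p.2.2.2 p.1)).card

/-- The number of 4-cycles in `G` (each unlabeled 4-cycle corresponds to exactly
8 ordered quadruples). -/
noncomputable def a4 {V : Type*} [Fintype V] (G : SimpleGraph V) : ℚ :=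
  (cycles4Ordered G : ℚ) / 8

/-- The disjoint union of `q` copies of the complete bipartite graph `K_{r,r}`. -/
def qKrr (q r : ℕ) : SimpleGraph (Fin q × (Fin r ⊕ Fin r)) where
  Adj u v := u.1 = v.1 ∧ (completeBipartiteGraph (Fin r) (Fin r)).Adj u.2 v.2
  symm := by
    constructor
    rintro ⟨a, x⟩ ⟨b, y⟩ ⟨h1, h2⟩
    exact ⟨h1.symm, h2.symm⟩
  loopless := by
    constructor
    rintro ⟨a, x⟩ ⟨-, h⟩
    exact (completeBipartiteGraph (Fin r) (Fin r)).irrefl h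

open Finset

lemma Nat.mul_sub_one_eq_mul_sub_one_iff {m r : ℕ} (h : m ≤ r) :
    m * (m - 1) = m * (r - 1) ↔ m = 0 ∨ m = r := by
  rcases Nat.eq_zero_or_pos m with rfl | hm
  · simp
  · rw [Nat.mul_right_inj hm.ne']
    omega

namespace SimpleGraph

variable {V W ι : Type*}

section Codegree

variable [Fintype V] [DecidableEq V] (G : SimpleGraph V) [DecidableRel G.Adj]

def codegree (a c : V) : ℕ := #(G.neighborFinset a ∩ G.neighborFinset c)

lemma codegree_le_degree (a c : V) : G.codegree a c ≤ G.degree a := by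
  rw [← card_neighborFinset_eq_degree]
  exact card_le_card inter_subset_left

lemma codegree_eq_card_filter (a c : V) :
    G.codegree a c = #{b | G.Adj a b ∧ G.Adj c b} := by
  rw [codegree]
  congr 1
  ext b
  simp

lemma cycles4Ordered_eq_sum_codegree :
    cycles4Ordered G =
      ∑ p ∈ univ.offDiag, G.codegree p.1 p.2 * (G.codegree p.1 p.2 - 1) := by
  unfold cycles4Ordered
  rw [card_eq_sum_card_fiberwise (f := fun p : V × V × V × V => (p.1, p.2.2.1))
    (t := univ.offDiag) (by intro p hp; simp_all)]
  refine sum_congr rfl fun ⟨a, c⟩ hac => ?_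
  rw [Nat.mul_sub_one, codegree, ← offDiag_card]
  refine card_nbij' (fun p => (p.2.1, p.2.2.2)) (fun p => (a, p.1, c, p.2)) ?_ ?_ ?_ ?_
  · rintro ⟨a', b, c', d⟩ hp
    simp only [coe_filter, Set.mem_ofPred_eq, mem_filter, mem_univ, true_and, Prod.mk.injEq] at hp
    obtain ⟨⟨-, -, -, -, hbd, -, hab, hbc, hcd, hda⟩, rfl, rfl⟩ := hp
    simp only [coe_offDiag, coe_inter, coe_neighborFinset, Set.mem_offDiag, Set.mem_inter_iff,
      mem_neighborSet]
    exact ⟨⟨hab, hbc.symm⟩, ⟨hda.symm, hcd⟩, hbd⟩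
  · rintro ⟨b, d⟩ hp
    simp only [mem_offDiag] at hac
    simp only [coe_offDiag, coe_inter, coe_neighborFinset, Set.mem_offDiag, Set.mem_inter_iff,
      mem_neighborSet] at hp
    obtain ⟨⟨hab, hcb⟩, ⟨had, hcd⟩, hbd⟩ := hp
    simp [hab.ne, hac.2.2, had.ne, hcb.ne', hbd, hcd.ne, hab, hcb.symm, hcd, had.symm]
  · rintro ⟨a', b, c', d⟩ hp
    simp only [coe_filter, Set.mem_ofPred_eq, mem_filter, mem_univ, true_and, Prod.mk.injEq] at hp
    obtain ⟨-, rfl, rfl⟩ := hp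
    rfl
  · intro _ _
    rfl

lemma sum_codegree_offDiag :
    ∑ p ∈ univ.offDiag, G.codegree p.1 p.2 = ∑ b, G.degree b * (G.degree b - 1) := by
  have := sum_card_bipartiteAbove_eq_sum_card_bipartiteBelow (s := univ.offDiag) (t := univ)
    (r := fun p b => G.Adj p.1 b ∧ G.Adj p.2 b)
  simp only [bipartiteAbove, bipartiteBelow] at this
  simp only [codegree_eq_card_filter, this, Nat.mul_sub_one, ← card_neighborFinset_eq_degree,
    ← offDiag_card]
  refine sum_congr rfl fun b _ => congrArg card ?_
  ext ⟨a, c⟩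
  simp [adj_comm]
  tauto

end Codegree

section Regular

variable [Fintype V] [DecidableEq V] {G : SimpleGraph V} [DecidableRel G.Adj] {r : ℕ}

lemma sum_codegree_offDiag_of_isRegularOfDegree (hreg : G.IsRegularOfDegree r) :
    ∑ p ∈ univ.offDiag, G.codegree p.1 p.2 = Fintype.card V * (r * (r - 1)) := by
  simp [sum_codegree_offDiag, hreg.degree_eq]

lemma codegree_mul_sub_one_le (hreg : G.IsRegularOfDegree r) (a c : V) :
    G.codegree a c * (G.codegree a c - 1) ≤ G.codegree a c * (r - 1) :=
  Nat.mul_le_mul_left _ (Nat.sub_le_sub_right (hreg a ▸ G.codegree_le_degree a c) 1)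

lemma sum_codegree_mul_sub_one (hreg : G.IsRegularOfDegree r) :
    ∑ p ∈ univ.offDiag, G.codegree p.1 p.2 * (r - 1) =
      Fintype.card V * (r * (r - 1)) * (r - 1) := by
  rw [← sum_mul, sum_codegree_offDiag_of_isRegularOfDegree hreg]

lemma cycles4Ordered_le_of_isRegularOfDegree (hreg : G.IsRegularOfDegree r) :
    cycles4Ordered G ≤ Fintype.card V * (r * (r - 1)) * (r - 1) := by
  rw [cycles4Ordered_eq_sum_codegree, ← sum_codegree_mul_sub_one hreg]
  exact sum_le_sum fun p _ => codegree_mul_sub_one_le hreg p.1 p.2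

lemma cycles4Ordered_eq_iff_of_isRegularOfDegree (hreg : G.IsRegularOfDegree r) :
    cycles4Ordered G = Fintype.card V * (r * (r - 1)) * (r - 1) ↔
      ∀ a c, a ≠ c → G.codegree a c = 0 ∨ G.codegree a c = r := by
  rw [cycles4Ordered_eq_sum_codegree, ← sum_codegree_mul_sub_one hreg,
    sum_eq_sum_iff_of_le fun p _ => codegree_mul_sub_one_le hreg p.1 p.2]
  simp only [mem_offDiag, mem_univ, true_and, Prod.forall]
  exact forall₂_congr fun a c => imp_congr_right fun _ =>
    Nat.mul_sub_one_eq_mul_sub_one_iff (hreg a ▸ G.codegree_le_degree a c)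

end Regular

/-- `G` is the disjoint union over `i : ι` of the complete bipartite graphs with sides
`{v | κ v = i ∧ s v}` and `{v | κ v = i ∧ ¬ s v}`. -/
def IsUnionOfCompleteBipartite (G : SimpleGraph V) (κ : V → ι) (s : V → Bool) : Prop :=
  ∀ u w, G.Adj u w ↔ κ u = κ w ∧ s u ≠ s w

namespace IsUnionOfCompleteBipartite

variable {G : SimpleGraph V} {H : SimpleGraph W} {κ : V → ι} {s : V → Bool}

lemma of_iso {κ' : W → ι} {s' : W → Bool} (e : G ≃g H)
    (h : H.IsUnionOfCompleteBipartite κ' s') :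
    G.IsUnionOfCompleteBipartite (κ' ∘ e) (s' ∘ e) :=
  fun _ _ => e.map_adj_iff.symm.trans (h _ _)

variable [Fintype V] [Fintype W] [DecidableEq ι]

lemma nonempty_iso {κ' : W → ι} {s' : W → Bool} (hG : G.IsUnionOfCompleteBipartite κ s)
    (hH : H.IsUnionOfCompleteBipartite κ' s')
    (hcard : ∀ i b, #{v | κ v = i ∧ s v = b} = #{w | κ' w = i ∧ s' w = b}) :
    Nonempty (G ≃g H) := by
  let e (x : ι × Bool) : {v // (κ v, s v) = x} ≃ {w // (κ' w, s' w) = x} :=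
    Fintype.equivOfCardEq (by simp only [Fintype.card_subtype, Prod.ext_iff, hcard])
  refine ⟨⟨Equiv.ofFiberEquiv e, fun {u w} => ?_⟩⟩
  obtain ⟨hu1, hu2⟩ := Prod.mk.inj (Equiv.ofFiberEquiv_map e u)
  obtain ⟨hw1, hw2⟩ := Prod.mk.inj (Equiv.ofFiberEquiv_map e w)
  rw [hG, hH, hu1, hu2, hw1, hw2]

variable [DecidableEq V] [DecidableRel G.Adj]

lemma codegree_eq_zero_or_eq (hG : G.IsUnionOfCompleteBipartite κ s) {r : ℕ}
    (hcard : ∀ i b, #{v | κ v = i ∧ s v = b} = r) (a c : V) :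
    G.codegree a c = 0 ∨ G.codegree a c = r := by
  rw [codegree_eq_card_filter]
  simp only [hG _ _]
  by_cases hac : κ a = κ c ∧ s a = s c
  · right
    rw [← hcard (κ a) (!s a)]
    congr 1
    refine filter_congr fun b _ => ?_
    rw [hac.1, hac.2]
    cases s b <;> cases s c <;> simp [eq_comm]
  · left
    rw [card_eq_zero, filter_eq_empty_iff]
    rintro b - ⟨⟨hab, hsab⟩, ⟨hcb, hscb⟩⟩
    refine hac ⟨hab.trans hcb.symm, ?_⟩
    revert hsab hscb
    cases s a <;> cases s b <;> cases s c <;> simp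

end IsUnionOfCompleteBipartite

lemma isUnionOfCompleteBipartite_qKrr (q r : ℕ) :
    (qKrr q r).IsUnionOfCompleteBipartite Prod.fst (fun y => y.2.isLeft) := by
  rintro ⟨i, x⟩ ⟨j, y⟩
  change i = j ∧ (completeBipartiteGraph _ _).Adj x y ↔ _
  cases x <;> cases y <;> simp

lemma card_filter_qKrr (q r : ℕ) (i : Fin q) (b : Bool) :
    #{y : Fin q × (Fin r ⊕ Fin r) | y.1 = i ∧ y.2.isLeft = b} = r := by
  rw [card_filter, Fintype.sum_prod_type]
  simp only [Fintype.sum_sum_type, Sum.isLeft_inl, Sum.isLeft_inr]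
  cases b <;> simp

lemma IsUnionOfCompleteBipartite.nonempty_iso_qKrr [Fintype V] [Fintype ι] [DecidableEq ι]
    {G : SimpleGraph V} {κ : V → ι} {s : V → Bool} (hG : G.IsUnionOfCompleteBipartite κ s)
    {r : ℕ} (hcard : ∀ i b, #{v | κ v = i ∧ s v = b} = r) :
    Nonempty (G ≃g qKrr (Fintype.card ι) r) := by
  let e := Fintype.equivFin ι
  refine hG.nonempty_iso (κ' := e.symm ∘ Prod.fst) (s' := fun y => y.2.isLeft)
    (fun u w => ?_) fun i b => ?_
  · simp [isUnionOfCompleteBipartite_qKrr _ _ u w]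
  · simp only [Function.comp_apply, Equiv.symm_apply_eq, hcard, card_filter_qKrr]

lemma neighborFinset_ne_of_adj [Fintype V] {G : SimpleGraph V} [DecidableRel G.Adj] {u w : V}
    (h : G.Adj u w) :
    G.neighborFinset u ≠ G.neighborFinset w := fun he =>
  G.loopless.irrefl w (by simpa [he] using (G.mem_neighborFinset u w).2 h)

section CodegreeDichotomy

variable [Fintype V] [DecidableEq V] {G : SimpleGraph V} [DecidableRel G.Adj] {r : ℕ}

lemma neighborFinset_eq_of_adj_of_adj (hreg : G.IsRegularOfDegree r)
    (hcod : ∀ a c, a ≠ c → G.codegree a c = 0 ∨ G.codegree a c = r)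
    {a b b' : V} (hb : G.Adj a b) (hb' : G.Adj a b') :
    G.neighborFinset b = G.neighborFinset b' := by
  obtain rfl | hne := eq_or_ne b b'
  · rfl
  have hcommon : a ∈ G.neighborFinset b ∩ G.neighborFinset b' := by simp [hb.symm, hb'.symm]
  have hfull : r ≤ G.codegree b b' :=
    ((hcod b b' hne).resolve_left (card_ne_zero_of_mem hcommon)).ge
  have hcard (v : V) : #(G.neighborFinset v) = r := by rw [card_neighborFinset_eq_degree, hreg v]
  exact (eq_of_subset_of_card_le inter_subset_left (hcard b ▸ hfull)).symm.trans
    (eq_of_subset_of_card_le inter_subset_right (hcard b' ▸ hfull))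

lemma filter_neighborFinset_eq_of_adj (hreg : G.IsRegularOfDegree r)
    (hcod : ∀ a c, a ≠ c → G.codegree a c = 0 ∨ G.codegree a c = r)
    {a b : V} (hab : G.Adj a b) :
    ({v | G.neighborFinset v = G.neighborFinset b} : Finset V) = G.neighborFinset a := by
  ext v
  simp only [mem_filter, mem_univ, true_and, mem_neighborFinset]
  refine ⟨fun h => ?_, fun hav => neighborFinset_eq_of_adj_of_adj hreg hcod hav hab⟩
  have : a ∈ G.neighborFinset v := h ▸ (G.mem_neighborFinset b a).2 hab.symm
  exact ((G.mem_neighborFinset v a).1 this).symm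

lemma neighborFinset_eq_or_adj_of_reachable (hreg : G.IsRegularOfDegree r)
    (hcod : ∀ a c, a ≠ c → G.codegree a c = 0 ∨ G.codegree a c = r)
    {p u : V} (h : G.Reachable p u) :
    G.neighborFinset u = G.neighborFinset p ∨ G.Adj p u := by
  rw [reachable_iff_reflTransGen] at h
  induction h with
  | refl => exact .inl rfl
  | @tail u w _ huw ih =>
    rcases ih with hu | hpu
    · exact .inr ((G.mem_neighborFinset p w).1 (hu ▸ (G.mem_neighborFinset u w).2 huw))
    · exact .inl (neighborFinset_eq_of_adj_of_adj hreg hcod hpu.symm huw).symm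

lemma adj_iff_reachable_and_neighborFinset_ne (hreg : G.IsRegularOfDegree r)
    (hcod : ∀ a c, a ≠ c → G.codegree a c = 0 ∨ G.codegree a c = r)
    {u w : V} : G.Adj u w ↔ G.Reachable u w ∧ G.neighborFinset u ≠ G.neighborFinset w :=
  ⟨fun h => ⟨h.reachable, neighborFinset_ne_of_adj h⟩, fun h =>
    (neighborFinset_eq_or_adj_of_reachable hreg hcod h.1).resolve_left h.2.symm⟩

lemma neighborFinset_eq_iff_of_reachable (hreg : G.IsRegularOfDegree r)
    (hcod : ∀ a c, a ≠ c → G.codegree a c = 0 ∨ G.codegree a c = r)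
    {p u w : V} (hu : G.Reachable p u) (hw : G.Reachable p w) :
    G.neighborFinset u = G.neighborFinset w ↔
      (G.neighborFinset u = G.neighborFinset p ↔ G.neighborFinset w = G.neighborFinset p) := by
  rcases neighborFinset_eq_or_adj_of_reachable hreg hcod hu with hu | hpu <;>
    rcases neighborFinset_eq_or_adj_of_reachable hreg hcod hw with hw | hpw
  · simp [hu, hw]
  · simp [hu, neighborFinset_ne_of_adj hpw, (neighborFinset_ne_of_adj hpw).symm]
  · simp [hw, (neighborFinset_ne_of_adj hpu).symm]
  · simp [neighborFinset_eq_of_adj_of_adj hreg hcod hpu hpw, (neighborFinset_ne_of_adj hpw).symm]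

lemma card_filter_reachable_neighborFinset_eq (hreg : G.IsRegularOfDegree r)
    (hcod : ∀ a c, a ≠ c → G.codegree a c = 0 ∨ G.codegree a c = r)
    (hr : 0 < r) (p : V) (b : Bool) :
    #{v | G.Reachable p v ∧ decide (G.neighborFinset v = G.neighborFinset p) = b} = r := by
  cases b
  · rw [← hreg p, ← card_neighborFinset_eq_degree]
    congr 1
    ext v
    simp only [mem_filter, mem_univ, true_and, mem_neighborFinset, decide_eq_false_iff_not]
    exact ⟨fun h => (neighborFinset_eq_or_adj_of_reachable hreg hcod h.1).resolve_left h.2,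
      fun h => ⟨h.reachable, (neighborFinset_ne_of_adj h).symm⟩⟩
  · obtain ⟨a, ha⟩ : (G.neighborFinset p).Nonempty :=
      card_pos.1 (by rw [card_neighborFinset_eq_degree, hreg p]; exact hr)
    have hpa : G.Adj p a := (G.mem_neighborFinset p a).1 ha
    rw [← hreg a, ← card_neighborFinset_eq_degree,
      ← filter_neighborFinset_eq_of_adj hreg hcod hpa.symm]
    congr 1
    refine filter_congr fun v _ => ?_
    simp only [decide_eq_true_iff, and_iff_right_iff_imp]
    intro h
    have hva : G.Adj v a := (G.mem_neighborFinset v a).1 (h ▸ ha)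
    exact hpa.reachable.trans hva.symm.reachable

open scoped Classical in
lemma exists_isUnionOfCompleteBipartite (hreg : G.IsRegularOfDegree r)
    (hcod : ∀ a c, a ≠ c → G.codegree a c = 0 ∨ G.codegree a c = r)
    (hr : 0 < r) :
    ∃ (κ : V → G.ConnectedComponent) (s : V → Bool), G.IsUnionOfCompleteBipartite κ s ∧
      ∀ i b, #{v | κ v = i ∧ s v = b} = r := by
  let p (v : V) : V := Quot.out (G.connectedComponentMk v)
  have hp (v : V) : G.Reachable (p v) v := ConnectedComponent.exact (Quot.out_eq _)
  have hp_eq {u w : V} (h : G.Reachable u w) : p u = p w := by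
    simp only [p, ConnectedComponent.sound h]
  refine ⟨G.connectedComponentMk, fun v => decide (G.neighborFinset v = G.neighborFinset (p v)),
    fun u w => ?_, ConnectedComponent.ind fun u b => ?_⟩
  · rw [adj_iff_reachable_and_neighborFinset_ne hreg hcod, ConnectedComponent.eq]
    refine and_congr_right fun huw => ?_
    dsimp only
    rw [← hp_eq huw, ne_eq,
      neighborFinset_eq_iff_of_reachable hreg hcod (hp u) ((hp u).trans huw)]
    simp
  · rw [← card_filter_reachable_neighborFinset_eq hreg hcod hr (p u) b]
    congr 1
    refine filter_congr fun v _ => ?_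
    have hreach : G.Reachable v u ↔ G.Reachable (p u) v :=
      ⟨fun h => (hp u).trans h.symm, fun h => h.symm.trans (hp u)⟩
    rw [ConnectedComponent.eq, ← hreach]
    exact and_congr_right fun hvu => by rw [← hp_eq hvu]

lemma codegree_dichotomy_iff_exists_iso_qKrr (hreg : G.IsRegularOfDegree r) (hr : 0 < r) :
    (∀ a c, a ≠ c → G.codegree a c = 0 ∨ G.codegree a c = r) ↔
      ∃ q, Nonempty (G ≃g qKrr q r) := by
  refine ⟨fun hcod => ?_, fun ⟨q, ⟨e⟩⟩ a c _ => ?_⟩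
  · classical
    obtain ⟨κ, s, hG, hcard⟩ := exists_isUnionOfCompleteBipartite hreg hcod hr
    exact ⟨_, hG.nonempty_iso_qKrr hcard⟩
  · refine ((isUnionOfCompleteBipartite_qKrr q r).of_iso e).codegree_eq_zero_or_eq
      (fun i b => ?_) a c
    exact (card_equiv e.toEquiv (by simp)).trans (card_filter_qKrr q r i b)

end CodegreeDichotomy

end SimpleGraph

theorem four_cycles_bound_general {V : Type*} [Fintype V]
    (G : SimpleGraph V) [DecidableRel G.Adj] (n r : ℕ) (hr : 2 ≤ r)
    (hcard : Fintype.card V = 2 * n)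
    (hreg : ∀ v : V, G.degree v = r) :
    a4 G ≤ (n * r * ((r : ℚ) - 1) ^ 2) / 4 ∧
    (a4 G = (n * r * ((r : ℚ) - 1) ^ 2) / 4 ↔
      ∃ q : ℕ, n = q * r ∧ Nonempty (G ≃g qKrr q r)) := by
  classical
  have hbound : ((Fintype.card V * (r * (r - 1)) * (r - 1) : ℕ) : ℚ) / 8 =
      n * r * ((r : ℚ) - 1) ^ 2 / 4 := by
    rw [hcard]
    push_cast [show 1 ≤ r by omega]
    ring
  rw [a4, ← hbound, div_le_div_iff_of_pos_right (by norm_num), Nat.cast_le,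
    div_left_inj' (by norm_num), Nat.cast_inj,
    SimpleGraph.cycles4Ordered_eq_iff_of_isRegularOfDegree hreg,
    SimpleGraph.codegree_dichotomy_iff_exists_iso_qKrr hreg (by omega)]
  refine ⟨SimpleGraph.cycles4Ordered_le_of_isRegularOfDegree hreg,
    exists_congr fun q => ⟨fun ⟨e⟩ => ⟨?_, ⟨e⟩⟩, And.right⟩⟩
  have hqr := Fintype.card_congr e.toEquiv
  simp only [hcard, Fintype.card_prod, Fintype.card_fin, Fintype.card_sum] at hqr
  linarith

/-- Let `G` be an `r`-regular bipartite graph on `2n` vertices, `r ≥ 2`, and let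
`a₄(G)` be the number of 4-cycles in `G`.  Then `a₄(G) ≤ nr(r−1)²/4`, with equality
if and only if `n = qr` for some integer `q` and `G` is the disjoint union of `q`
copies of `K_{r,r}`. -/
theorem four_cycles_bound {V : Type*} [Fintype V]
    (G : SimpleGraph V) [DecidableRel G.Adj] (n r : ℕ) (hr : 2 ≤ r)
    (hcard : Fintype.card V = 2 * n) (hbip : G.Colorable 2)
    (hreg : ∀ v : V, G.degree v = r) :
    a4 G ≤ (n * r * ((r : ℚ) - 1) ^ 2) / 4 ∧
    (a4 G = (n * r * ((r : ℚ) - 1) ^ 2) / 4 ↔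
      ∃ q : ℕ, n = q * r ∧ Nonempty (G ≃g qKrr q r)) :=
  four_cycles_bound_general G n r hr hcard hreg
end
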